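/- Let Ω and n be finite types, let p : Ω → ℝ be nonnegative with ∑_ω p ω = 1, and let Z : Ω → Matrix n n ℂ be such that Z ω is Hermitian for every ω. Then ∑_{ω} (p ω) · ‖Z ω‖₁ ≤ Re Tr √( ∑_{ω} (p ω) • (Z ω * Z ω) ), where ∑_ω (p ω) • (Z ω * Z ω) is positive semidefinite and √ is its positive semidefinite square root. -/

import Mathlib

open Matrix
open scoped ComplexOrder

/-- Positive semidefinite square root, extended to a total function
(it agrees with `Matrix.PosSemidef.sqrt` on positive semidefinite matrices). -/
noncomputable def psqrt {n : Type*} [Fintype n] [DecidableEq n] (A : Matrix n n ℂ) :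
    Matrix n n ℂ :=
  open scoped Classical in
  if h : A.PosSemidef then
    (h.1.eigenvectorUnitary : Matrix n n ℂ) *
      diagonal (((↑) : ℝ → ℂ) ∘ (√·) ∘ h.1.eigenvalues) *
      (star h.1.eigenvectorUnitary : Matrix n n ℂ)
  else 0

/-- The trace norm ‖A‖₁ = Re Tr √(AᴴA). -/
noncomputable def traceNorm {n : Type*} [Fintype n] [DecidableEq n] (A : Matrix n n ℂ) : ℝ :=
  (psqrt (Aᴴ * A)).trace.re

/-!
For Hermitian `Z` the trace norm is `Tr √(Z²)`, so the left-hand side is the trace of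
`∑ ω, p ω • √(Z ω ^ 2)`. The operator square root is operator concave (Löwner–Heinz), so by
Jensen's inequality this matrix lies below `√(∑ ω, p ω • Z ω ^ 2)` in the Löwner order, and the
trace is monotone for that order.
-/

lemma Matrix.IsHermitian.traceNorm_eq {n : Type*} [Fintype n] [DecidableEq n]
    {Z : Matrix n n ℂ} (hZ : Z.IsHermitian) : traceNorm Z = (psqrt (Z * Z)).trace.re := by
  rw [traceNorm, hZ.eq]

section LoewnerOrder

-- `CFC.concaveOn_sqrt` needs a C⋆-algebra; the L2 operator norm makes `Matrix n n ℂ` one.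
-- Kept local: these instances change how the final statement elaborates.
open scoped MatrixOrder Matrix.Norms.L2Operator

variable {n : Type*} [Fintype n]

lemma psqrt_eq_cfcSqrt [DecidableEq n] (A : Matrix n n ℂ) : psqrt A = CFC.sqrt A := by
  by_cases hA : A.PosSemidef
  · rw [psqrt, dif_pos hA, CFC.sqrt_eq_cfc, cfc_nnreal_eq_real _ A, hA.1.cfc_eq,
      IsHermitian.cfc, Unitary.conjStarAlgAut_apply]
    congr 3
    funext i
    simp [Real.coe_sqrt, max_eq_left (hA.eigenvalues_nonneg i)]
  · rw [psqrt, dif_neg hA, CFC.sqrt_of_not_nonneg (nonneg_iff_posSemidef.not.mpr hA)]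

lemma Matrix.re_trace_mono : Monotone fun A : Matrix n n ℂ => A.trace.re := by
  intro A B hAB
  have h := (le_iff.mp hAB).trace_nonneg
  rw [trace_sub] at h
  simpa using (Complex.le_def.mp h).1

lemma sum_mul_re_trace_psqrt_le [DecidableEq n] {Ω : Type*} [Fintype Ω] {p : Ω → ℝ}
    (hp0 : ∀ ω, 0 ≤ p ω) (hp1 : ∑ ω, p ω = 1) {Y : Ω → Matrix n n ℂ}
    (hY : ∀ ω, (Y ω).PosSemidef) :
    ∑ ω, p ω * (psqrt (Y ω)).trace.re ≤ (psqrt (∑ ω, p ω • Y ω)).trace.re := by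
  have jensen : ∑ ω, p ω • CFC.sqrt (Y ω) ≤ CFC.sqrt (∑ ω, p ω • Y ω) :=
    CFC.concaveOn_sqrt.le_map_sum (fun ω _ => hp0 ω) hp1 fun ω _ => (hY ω).nonneg
  simpa [psqrt_eq_cfcSqrt, trace_sum, Complex.re_sum] using re_trace_mono jensen

end LoewnerOrder

/-- First inequality of eq. (25) in the paper's proof of its Covering Lemma: the
expected trace norm of a finitely supported random Hermitian matrix is at most the trace
of the square root of its expected square; moreover the expected square is positive
semidefinite. -/
theorem expected_trace_norm_le_trace_sqrt_second_moment
    {Ω : Type*} [Fintype Ω]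
    {n : Type*} [Fintype n] [DecidableEq n]
    (p : Ω → ℝ) (hp0 : ∀ ω, 0 ≤ p ω) (hp1 : ∑ ω, p ω = 1)
    (Z : Ω → Matrix n n ℂ) (hZ : ∀ ω, (Z ω).IsHermitian) :
    (∑ ω, p ω • (Z ω * Z ω)).PosSemidef ∧
    ∑ ω, p ω * traceNorm (Z ω) ≤ ((psqrt (∑ ω, p ω • (Z ω * Z ω))).trace).re := by
  have hsq : ∀ ω, (Z ω * Z ω).PosSemidef := fun ω => by
    simpa [(hZ ω).eq] using posSemidef_conjTranspose_mul_self (Z ω)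
  refine ⟨posSemidef_sum _ fun ω _ => (hsq ω).smul (hp0 ω), ?_⟩
  simpa only [(hZ _).traceNorm_eq] using sum_mul_re_trace_psqrt_le hp0 hp1 hsq
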